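/- arXiv:math/0412355 — 4 statements merged into one kernel-verified Lean document; each statement's English description precedes it below -/
import Mathlib

section
/- For each integer s ≥ 2 and each integer t, the set Ω(s,t) of positive integers distinguished with respect to (s,t) contains Ω(s,1); in particular, since Ω(s,1) contains all positive integers coprime to s(s−1), the set Ω(s,t) ⊇ {r : gcd(r, s(s−1)) = 1} is infinite. -/
/-- `β_{s,t}(k) = t·∑_{i=0}^{k-1} s^i`. -/
def beta (s t : ℤ) (k : ℕ) : ℤ := t * ∑ i ∈ Finset.range k, s ^ i

/-- `Ω(s,t)`: the set of positive integers distinguished with respect to `(s,t)`. -/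
def Omega (s t : ℤ) : Set ℕ :=
  {r | 0 < r ∧ IsCoprime (r : ℤ) s ∧ (r : ℤ) ∣ beta s t (orderOf ((s : ZMod r)))}

theorem Omega_superset_and_infinite (s t : ℤ) (hs : 2 ≤ s) :
    Omega s 1 ⊆ Omega s t ∧
    {r : ℕ | 0 < r ∧ IsCoprime (r : ℤ) (s * (s - 1))} ⊆ Omega s t ∧
    (Omega s t).Infinite := by
  have hsub : Omega s 1 ⊆ Omega s t := by
    rintro r ⟨hr, hc, hd⟩
    refine ⟨hr, hc, ?_⟩
    have : (r : ℤ) ∣ ∑ i ∈ Finset.range (orderOf ((s : ZMod r))), s ^ i := by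
      simpa [beta] using hd
    simpa [beta] using this.mul_left t
  have hkey : {r : ℕ | 0 < r ∧ IsCoprime (r : ℤ) (s * (s - 1))} ⊆ Omega s 1 := by
    rintro r ⟨hr, hcop⟩
    have hcs : IsCoprime (r : ℤ) s := hcop.of_isCoprime_of_dvd_right ⟨s - 1, rfl⟩
    have hcs1 : IsCoprime (r : ℤ) (s - 1) :=
      hcop.of_isCoprime_of_dvd_right ⟨s, mul_comm _ _⟩
    refine ⟨hr, hcs, ?_⟩
    set k := orderOf ((s : ZMod r)) with hk
    have h1 : ((s : ZMod r)) ^ k = 1 := pow_orderOf_eq_one _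
    have h2 : (r : ℤ) ∣ s ^ k - 1 := by
      have : ((s ^ k - 1 : ℤ) : ZMod r) = 0 := by push_cast [h1]; ring
      exact (ZMod.intCast_zmod_eq_zero_iff_dvd _ _).mp this
    have h3 : (r : ℤ) ∣ (∑ i ∈ Finset.range k, s ^ i) * (s - 1) := by
      rw [geom_sum_mul]; exact h2
    have h4 := hcs1.dvd_of_dvd_mul_right h3
    simpa [beta] using h4
  refine ⟨hsub, fun r hr => hsub (hkey hr), ?_⟩
  apply Set.Infinite.mono (fun r hr => hsub (hkey hr))
  have hm : (0:ℤ) < s * (s - 1) := by nlinarith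
  set m : ℕ := (s * (s - 1)).toNat with hmdef
  have hmc : (m : ℤ) = s * (s - 1) := Int.toNat_of_nonneg hm.le
  have hm2 : 2 ≤ m := by
    have : (2:ℤ) ≤ (m:ℤ) := by rw [hmc]; nlinarith
    exact_mod_cast this
  apply Set.infinite_of_injective_forall_mem (f := fun n : ℕ => n * m + 1)
  case hi =>
    intro a b hab
    simp only at hab
    have h : a * m = b * m := by omega
    exact Nat.eq_of_mul_eq_mul_right (by omega) h
  case hf =>
    intro n
    refine ⟨by omega, ⟨1, -n, ?_⟩⟩
    push_cast
    rw [← hmc]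
    ring
end

section
/- Let s ≥ 2, t be integers, r a positive integer distinguished with respect to (s,t), ω = e^{2πi/r}, and n an integer coprime to r. Define the formal power series ψ_{s,t,r,n} = ∑_{j=1}^{ord_r(s)} ω^{n·β_{s,t}(j)} · G(ω^{n s^j}), where G(λ) = ∑_{m≥0} λ^m x^m is the geometric series. Then φ_{s,t}(ψ_{s,t,r,n}) = ψ_{s,t,r,n}, i.e., ψ_{s,t,r,n} is a fixed point of the coefficient extraction map φ_{s,t}. -/
open Complex

/-- The coefficient sequence (indexed by `ℤ`, extended two-sidedly) of
`ψ_{s,t,r,n} = ∑_{j=1}^{ord_r(s)} ω^{n β_{s,t}(j)} G(ω^{n s^j})`, where `G(λ)` is the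
geometric series with ratio `λ`: its `m`-th coefficient is
`∑_{j=1}^{ord_r(s)} ω^{n β_{s,t}(j)} (ω^{n s^j})^m`. -/
noncomputable def psi (s t : ℤ) (r : ℕ) (n : ℤ) (m : ℤ) : ℂ :=
  ∑ j ∈ Finset.Icc 1 (orderOf ((s : ZMod r))),
    Complex.exp (2 * Real.pi * Complex.I / r) ^ (n * beta s t j) *
      (Complex.exp (2 * Real.pi * Complex.I / r) ^ (n * s ^ j)) ^ m

/-- If `r` is distinguished with respect to `(s,t)`, then `ψ_{s,t,r,n}` is a fixed
point of the coefficient-extraction map `φ_{s,t} : a ↦ (m ↦ a(sm+t))`. -/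
theorem psi_fixed (s t : ℤ) (hs : 2 ≤ s) (r : ℕ) (hr : 0 < r)
    (hcop : IsCoprime (r : ℤ) s)
    (hdist : (r : ℤ) ∣ beta s t (orderOf ((s : ZMod r))))
    (n : ℤ) (hn : IsCoprime n (r : ℤ)) :
    (fun m : ℤ => psi s t r n (s * m + t)) = psi s t r n := by
  haveI : NeZero r := ⟨hr.ne'⟩
  set d := orderOf ((s : ZMod r)) with hd
  set ω := Complex.exp (2 * Real.pi * Complex.I / r) with hω
  have hω0 : ω ≠ 0 := Complex.exp_ne_zero _
  have hωr : ω ^ (r : ℤ) = 1 := by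
    rw [hω, zpow_natCast, ← Complex.exp_nat_mul]
    have : (r : ℂ) * (2 * Real.pi * Complex.I / r) = 2 * Real.pi * Complex.I := by
      field_simp
      rw [div_self (by exact_mod_cast hr.ne' : (r:ℂ) ≠ 0)]
    rw [this, Complex.exp_two_pi_mul_I]
  have hcong : ∀ a b : ℤ, (r : ℤ) ∣ a - b → ω ^ a = ω ^ b := by
    rintro a b ⟨c, hc⟩
    have ha : a = b + (r : ℤ) * c := by linarith
    rw [ha, zpow_add₀ hω0, zpow_mul, hωr, one_zpow, mul_one]
  -- s is a unit mod r
  have hsu : IsUnit ((s : ZMod r)) := by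
    obtain ⟨a, b, hab⟩ := hcop
    refine IsUnit.of_mul_eq_one ((b : ZMod r)) ?_
    have : ((a * r + b * s : ℤ) : ZMod r) = 1 := by rw [hab]; simp
    push_cast at this
    simpa [ZMod.natCast_self, mul_comm] using this
  have hd1 : 1 ≤ d := by
    obtain ⟨u, hu⟩ := hsu
    have := orderOf_pos u
    rw [hd, ← hu, orderOf_units]
    omega
  have hsd : (r : ℤ) ∣ s ^ d - 1 := by
    have h1 : ((s : ZMod r)) ^ d = 1 := pow_orderOf_eq_one _
    have : ((s ^ d - 1 : ℤ) : ZMod r) = 0 := by push_cast [h1]; ring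
    exact (ZMod.intCast_zmod_eq_zero_iff_dvd _ _).mp this
  have hbeta : ∀ j : ℕ, beta s t (j + 1) = beta s t j + t * s ^ j := by
    intro j
    unfold beta
    rw [Finset.sum_range_succ]
    ring
  have hbeta' : beta s t (d + 1) = s * beta s t d + t := by
    unfold beta
    rw [Finset.sum_range_succ']
    simp only [pow_succ, pow_zero, ← Finset.sum_mul]
    ring
  have h1 : beta s t 1 = t := by simp [beta]
  funext m
  set f : ℕ → ℂ := fun j => ω ^ (n * beta s t j + n * s ^ j * m) with hf
  have hterm : ∀ (k : ℤ) (j : ℕ), ω ^ (n * beta s t j) * (ω ^ (n * s ^ j)) ^ k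
      = ω ^ (n * beta s t j + n * s ^ j * k) := by
    intro k j
    rw [← zpow_mul, ← zpow_add₀ hω0]
  have hfd : f (d + 1) = f 1 := by
    apply hcong
    have key : (n * beta s t (d + 1) + n * s ^ (d + 1) * m) - (n * beta s t 1 + n * s ^ 1 * m)
        = n * s * beta s t d + n * m * s * (s ^ d - 1) := by
      rw [hbeta', h1]; ring
    rw [key]
    exact dvd_add (Dvd.dvd.mul_left hdist _) (Dvd.dvd.mul_left hsd _)
  have hIcc : ∀ g : ℕ → ℂ, ∑ j ∈ Finset.Icc 1 d, g j = ∑ i ∈ Finset.range d, g (1 + i) := by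
    intro g
    rw [← Finset.Ico_add_one_right_eq_Icc, Finset.sum_Ico_eq_sum_range]
    simp
  have hL : psi s t r n (s * m + t) = ∑ j ∈ Finset.Icc 1 d, f (j + 1) := by
    unfold psi
    rw [← hd, ← hω]
    refine Finset.sum_congr rfl fun j _ => ?_
    rw [hterm]
    congr 1
    rw [hbeta j]
    ring
  have hR : psi s t r n m = ∑ j ∈ Finset.Icc 1 d, f j := by
    unfold psi
    rw [← hd, ← hω]
    exact Finset.sum_congr rfl fun j _ => hterm m j
  rw [hL, hR, hIcc, hIcc]
  set g : ℕ → ℂ := fun i => f (1 + i) with hg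
  have hgs : ∀ i, f (1 + i + 1) = g (i + 1) := by
    intro i; simp only [hg]; ring_nf
  simp only [hgs]
  have e1 : ∑ i ∈ Finset.range (d + 1), g i = ∑ i ∈ Finset.range d, g (i + 1) + g 0 :=
    Finset.sum_range_succ' g d
  have e2 : ∑ i ∈ Finset.range (d + 1), g i = ∑ i ∈ Finset.range d, g i + g d :=
    Finset.sum_range_succ g d
  have e3 : g d = g 0 := by
    simp only [hg]
    rw [add_comm 1 d, hfd]
  rw [e3] at e2
  have := e1.symm.trans e2
  exact add_right_cancel this
end

section
/- Let s ≥ 2, t be integers, r a positive integer distinguished with respect to (s,t), ω = e^{2πi/r}, and n an integer coprime to r. Then ψ_{s,t,r,ns} = ω^{−nt} · ψ_{s,t,r,n}, where ψ_{s,t,r,n} = ∑_{j=1}^{ord_r(s)} ω^{n β_{s,t}(j)}·G(ω^{n s^j}) and G(λ) denotes the geometric power series ∑_{m≥0} λ^m x^m. -/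
open Complex

lemma beta_succ (s t : ℤ) (k : ℕ) : beta s t (k + 1) = s * beta s t k + t := by
  unfold beta
  rw [Finset.sum_range_succ', mul_add, Finset.mul_sum, Finset.mul_sum, Finset.mul_sum]
  simp only [pow_zero, pow_succ, mul_one]
  congr 1
  exact Finset.sum_congr rfl fun i _ => by ring

/-- `ψ_{s,t,r,ns} = ω^{−nt} · ψ_{s,t,r,n}` when `r` is distinguished for `(s,t)`. -/
theorem psi_rescale (s t : ℤ) (hs : 2 ≤ s) (r : ℕ) (hr : 0 < r)
    (hcop : IsCoprime (r : ℤ) s)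
    (hdist : (r : ℤ) ∣ beta s t (orderOf ((s : ZMod r))))
    (n : ℤ) (hn : IsCoprime n (r : ℤ)) :
    psi s t r (n * s) =
      fun m => Complex.exp (2 * Real.pi * Complex.I / r) ^ (-(n * t)) * psi s t r n m := by
  haveI : NeZero r := ⟨hr.ne'⟩
  funext m
  set d := orderOf ((s : ZMod r)) with hd
  set ω := Complex.exp (2 * Real.pi * Complex.I / r) with hω
  have hω0 : ω ≠ 0 := Complex.exp_ne_zero _
  have hωr : ω ^ (r : ℤ) = 1 := by
    rw [hω, zpow_natCast, ← Complex.exp_nat_mul]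
    have hrc : (r : ℂ) ≠ 0 := Nat.cast_ne_zero.mpr hr.ne'
    rw [show (r : ℂ) * (2 * Real.pi * Complex.I / r) = 2 * Real.pi * Complex.I by
      field_simp]
    exact Complex.exp_two_pi_mul_I
  have key : ∀ a b : ℤ, (r : ℤ) ∣ a - b → ω ^ a = ω ^ b := by
    rintro a b ⟨k, hk⟩
    have : a = b + r * k := by linarith
    rw [this, zpow_add₀ hω0, zpow_mul, hωr, one_zpow, mul_one]
  have hu : IsUnit ((s : ZMod r)) := by
    have := hcop.map (Int.castRingHom (ZMod r))
    simpa [ZMod.natCast_self, isCoprime_zero_left] using this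
  have hd1 : 1 ≤ d := by
    have h1 := orderOf_pos hu.unit
    rw [← orderOf_units, hu.unit_spec] at h1
    omega
  have hsd : (r : ℤ) ∣ s ^ d - 1 := by
    have h1 : ((s : ZMod r)) ^ d = 1 := pow_orderOf_eq_one _
    have : ((s ^ d - 1 : ℤ) : ZMod r) = 0 := by push_cast [h1]; ring
    exact (ZMod.intCast_zmod_eq_zero_iff_dvd _ r).mp this
  simp only [psi, ← hd, ← hω]
  have combine : ∀ (a b : ℤ), ω ^ a * (ω ^ b) ^ m = ω ^ (a + b * m) := by
    intro a b
    rw [zpow_add₀ hω0, zpow_mul]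
  calc ∑ j ∈ Finset.Icc 1 d, ω ^ (n * s * beta s t j) * (ω ^ (n * s * s ^ j)) ^ m
      = ∑ j ∈ Finset.Icc 1 d, ω ^ (n * s * beta s t j + n * s * s ^ j * m) := by
        simp only [combine]
    _ = ∑ j ∈ Finset.Icc 1 d, ω ^ (-(n * t) + (n * beta s t j + n * s ^ j * m)) := by
        refine Finset.sum_nbij' (fun j => if j = d then 1 else j + 1)
          (fun j => if j = 1 then d else j - 1) ?_ ?_ ?_ ?_ ?_
        · intro a ha
          simp only [Finset.mem_Icc] at ha ⊢
          split <;> omega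
        · intro a ha
          simp only [Finset.mem_Icc] at ha ⊢
          split <;> omega
        · intro a ha
          simp only [Finset.mem_Icc] at ha
          split_ifs <;> omega
        · intro a ha
          simp only [Finset.mem_Icc] at ha
          split_ifs <;> omega
        · intro a ha
          simp only [Finset.mem_Icc] at ha
          by_cases h : a = d
          · rw [if_pos h, h]
            apply key
            have hb1 : beta s t 1 = t := by simp [beta]
            rw [show n * s * beta s t d + n * s * s ^ d * m -
                (-(n * t) + (n * beta s t 1 + n * s ^ 1 * m)) =
                (n * s) * beta s t d + (n * m * s) * (s ^ d - 1) by rw [hb1]; ring]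
            exact dvd_add (Dvd.dvd.mul_left hdist _) (Dvd.dvd.mul_left hsd _)
          · rw [if_neg h]
            apply key
            rw [show n * s * beta s t a + n * s * s ^ a * m -
                (-(n * t) + (n * beta s t (a + 1) + n * s ^ (a + 1) * m)) =
                n * (s * beta s t a + t - beta s t (a + 1)) by rw [pow_succ]; ring,
              beta_succ]
            simp
    _ = ∑ j ∈ Finset.Icc 1 d, ω ^ (-(n * t)) * (ω ^ (n * beta s t j) * (ω ^ (n * s ^ j)) ^ m) := by
        refine Finset.sum_congr rfl fun j _ => ?_
        rw [combine, ← zpow_add₀ hω0]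
    _ = _ := by rw [← Finset.mul_sum]
end

section
/- Let s ≥ 2, and for i = 1,2 let rᵢ be positive integers coprime to s and nᵢ integers coprime to rᵢ. If the sets of poles {ω_{r₁}^{-n₁ s^j} : j ∈ ℕ} and {ω_{r₂}^{-n₂ s^j} : j ∈ ℕ} have a common element (where ω_r = e^{2πi/r}), then r₁ = r₂ and the s-cyclotomic cosets C_{s,r₁,n₁} and C_{s,r₂,n₂} are equal. -/
/-!
Both sides of the common pole are primitive roots of unity: `ω_r ^ a` has exact order `r` when
`a` is prime to `r`, and `n s ^ j` is prime to `r` because `n` and `s` are. A primitive root has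
a unique order, so `r₁ = r₂ =: r`, and then `n₁ s ^ j₁ ≡ n₂ s ^ j₂ [ZMOD r]`. Since `s` is
invertible modulo `r` (by Euler), this congruence puts `n₁` and `n₂` in the same orbit of
multiplication by `s`.
-/

/-- The `s`-cyclotomic coset of `n` mod `r`: `C_{s,r,n} = {s^i·n mod r : i ∈ ℕ}`. -/
def cyclCoset (s r : ℕ) (n : ℤ) : Set ℤ := {c | ∃ i : ℕ, c = (s : ℤ) ^ i * n % r}

theorem IsPrimitiveRoot.intModEq_of_zpow_eq {G : Type*} [CommGroupWithZero G] {ζ : G}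
    {k : ℕ} (h : IsPrimitiveRoot ζ k) (hk : k ≠ 0) {a b : ℤ} (hab : ζ ^ a = ζ ^ b) :
    a ≡ b [ZMOD k] := by
  have hζ : ζ ≠ 0 := h.ne_zero hk
  have hsub : ζ ^ (a - b) = 1 := by
    rw [zpow_sub₀ hζ, hab, div_self (zpow_ne_zero b hζ)]
  exact (Int.modEq_iff_dvd.mpr ((h.zpow_eq_one_iff_dvd _).mp hsub)).symm

theorem Complex.isPrimitiveRoot_exp_zpow {r : ℕ} (hr : r ≠ 0) {a : ℤ} (ha : IsCoprime a r) :
    IsPrimitiveRoot (exp (2 * Real.pi * I / r) ^ a) r :=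
  (isPrimitiveRoot_exp r hr).zpow_of_gcd_eq_one a (Int.isCoprime_iff_gcd_eq_one.mp ha)

theorem Int.exists_pow_mul_pow_modEq_one {s r : ℕ} (hcop : s.Coprime r) (hr : 0 < r) (j : ℕ) :
    ∃ e : ℕ, (s : ℤ) ^ e * (s : ℤ) ^ j ≡ 1 [ZMOD r] := by
  have heuler : (s : ℤ) ^ r.totient ≡ 1 [ZMOD r] := by
    exact_mod_cast Int.natCast_modEq_iff.mpr (Nat.ModEq.pow_totient hcop)
  have htot : 1 ≤ r.totient := Nat.totient_pos.mpr hr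
  refine ⟨j * (r.totient - 1), ?_⟩
  have hexp : j * (r.totient - 1) + j = r.totient * j := by
    rw [Nat.mul_sub_one, Nat.sub_add_cancel (Nat.le_mul_of_pos_right j htot), mul_comm]
  rw [← pow_add, hexp, pow_mul]
  simpa using heuler.pow j

theorem IsCoprime.mul_natCast_pow_left {n : ℤ} {r s : ℕ} (hn : IsCoprime n r) (hs : r.Coprime s)
    (j : ℕ) : IsCoprime (n * (s : ℤ) ^ j) r :=
  hn.mul_left (Nat.isCoprime_iff_coprime.mpr hs.symm).pow_left

theorem cyclCoset_subset_of_modEq_pow_mul {s r : ℕ} {n₁ n₂ : ℤ} {j : ℕ}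
    (h : n₁ ≡ (s : ℤ) ^ j * n₂ [ZMOD r]) : cyclCoset s r n₁ ⊆ cyclCoset s r n₂ := by
  rintro _ ⟨i, rfl⟩
  exact ⟨i + j, by rw [pow_add, mul_assoc]; exact h.mul_left _⟩

theorem cyclCoset_subset_of_modEq {s r : ℕ} (hcop : s.Coprime r) (hr : 0 < r) {n₁ n₂ : ℤ}
    {j₁ j₂ : ℕ} (h : n₁ * (s : ℤ) ^ j₁ ≡ n₂ * (s : ℤ) ^ j₂ [ZMOD r]) :
    cyclCoset s r n₁ ⊆ cyclCoset s r n₂ := by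
  obtain ⟨e, he⟩ := Int.exists_pow_mul_pow_modEq_one hcop hr j₁
  refine cyclCoset_subset_of_modEq_pow_mul (j := e + j₂) ?_
  calc n₁ = 1 * n₁ := (one_mul n₁).symm
    _ ≡ (s : ℤ) ^ e * (s : ℤ) ^ j₁ * n₁ [ZMOD r] := he.symm.mul_right n₁
    _ = (s : ℤ) ^ e * (n₁ * (s : ℤ) ^ j₁) := by ring
    _ ≡ (s : ℤ) ^ e * (n₂ * (s : ℤ) ^ j₂) [ZMOD r] := h.mul_left _
    _ = (s : ℤ) ^ (e + j₂) * n₂ := by ring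

theorem cyclCoset_eq_of_modEq {s r : ℕ} (hcop : s.Coprime r) (hr : 0 < r) {n₁ n₂ : ℤ}
    {j₁ j₂ : ℕ} (h : n₁ * (s : ℤ) ^ j₁ ≡ n₂ * (s : ℤ) ^ j₂ [ZMOD r]) :
    cyclCoset s r n₁ = cyclCoset s r n₂ :=
  (cyclCoset_subset_of_modEq hcop hr h).antisymm (cyclCoset_subset_of_modEq hcop hr h.symm)

theorem common_pole_general (s : ℕ) (r₁ r₂ : ℕ) (n₁ n₂ : ℤ)
    (hr₁ : 0 < r₁) (hr₂ : 0 < r₂)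
    (hcop₁ : Nat.Coprime r₁ s) (hcop₂ : Nat.Coprime r₂ s)
    (hn₁ : IsCoprime n₁ (r₁ : ℤ)) (hn₂ : IsCoprime n₂ (r₂ : ℤ))
    (hpole : ∃ j₁ j₂ : ℕ,
      Complex.exp (2 * Real.pi * Complex.I / r₁) ^ (-(n₁ * (s : ℤ) ^ j₁)) =
      Complex.exp (2 * Real.pi * Complex.I / r₂) ^ (-(n₂ * (s : ℤ) ^ j₂))) :
    r₁ = r₂ ∧ cyclCoset s r₁ n₁ = cyclCoset s r₂ n₂ := by
  obtain ⟨j₁, j₂, hpole⟩ := hpole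
  have hprim₁ := Complex.isPrimitiveRoot_exp_zpow hr₁.ne'
    (hn₁.mul_natCast_pow_left hcop₁ j₁).neg_left
  have hprim₂ := Complex.isPrimitiveRoot_exp_zpow hr₂.ne'
    (hn₂.mul_natCast_pow_left hcop₂ j₂).neg_left
  obtain rfl : r₁ = r₂ := hprim₁.unique (hpole ▸ hprim₂)
  have hmod := (Complex.isPrimitiveRoot_exp r₁ hr₁.ne').intModEq_of_zpow_eq hr₁.ne' hpole
  exact ⟨rfl, cyclCoset_eq_of_modEq hcop₁.symm hr₁ (Int.neg_modEq_neg.mp hmod)⟩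

/-- If the pole sets `{ω_{r₁}^{-n₁ s^j}}` and `{ω_{r₂}^{-n₂ s^j}}` share an element,
then `r₁ = r₂` and the corresponding `s`-cyclotomic cosets coincide. -/
theorem common_pole (s : ℕ) (hs : 2 ≤ s) (r₁ r₂ : ℕ) (n₁ n₂ : ℤ)
    (hr₁ : 0 < r₁) (hr₂ : 0 < r₂)
    (hcop₁ : Nat.Coprime r₁ s) (hcop₂ : Nat.Coprime r₂ s)
    (hn₁ : IsCoprime n₁ (r₁ : ℤ)) (hn₂ : IsCoprime n₂ (r₂ : ℤ))
    (hpole : ∃ j₁ j₂ : ℕ,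
      Complex.exp (2 * Real.pi * Complex.I / r₁) ^ (-(n₁ * (s : ℤ) ^ j₁)) =
      Complex.exp (2 * Real.pi * Complex.I / r₂) ^ (-(n₂ * (s : ℤ) ^ j₂))) :
    r₁ = r₂ ∧ cyclCoset s r₁ n₁ = cyclCoset s r₂ n₂ :=
  common_pole_general s r₁ r₂ n₁ n₂ hr₁ hr₂ hcop₁ hcop₂ hn₁ hn₂ hpole
end
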